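/- For all real λ > 0, β > 0, every integer n ≥ 1 and all reals u > 0, v > 0, ∫₀^∞ e^{-u t} · e^{-β t} · (λ/(λ + v)) · Σ_{k=1}^{n} (β t)^{k-1} E_{n,k}(λ (β t)^n/(λ + v)) dt = λ ((β + u)^n - β^n) / ( u · ((λ + v)(β + u)^n - λ β^n) ). -/

import Mathlib

/-! Expanding the Mittag-Leffler function termwise turns `e^{-st} t^{δ-1} E_{ρ,δ}(a t^ρ)` into
a series of Gamma integrands `a^j t^{ρj+δ-1} e^{-st} / Γ(ρj+δ)`, each integrating to
`a^j s^{-(ρj+δ)}`; summing the geometric series gives the classical Laplace transform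
`s^{ρ-δ} / (s^ρ - a)` for `|a| < s^ρ`. With `s = β + u`, `a = λβ^n/(λ+v)`, `ρ = n` and
`δ = k`, the theorem reduces to the finite geometric sum
`Σ_{k=1}^n β^{k-1} s^{n-k} = (s^n - β^n)/(s - β)`. -/

open Real MeasureTheory Filter Finset

/-- Wright function `Φ(ρ, δ, z) = Σ_{j≥0} z^j / (j! Γ(ρ j + δ))`. -/
noncomputable def wright (ρ δ z : ℝ) : ℝ :=
  ∑' j : ℕ, z ^ j / ((Nat.factorial j : ℝ) * Real.Gamma (ρ * (j : ℝ) + δ))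

/-- Wright function with second parameter 0:
`Φ(ρ, 0, z) = Σ_{j≥1} z^j / (j! Γ(ρ j))`. -/
noncomputable def wright0 (ρ z : ℝ) : ℝ :=
  ∑' j : ℕ, z ^ (j + 1) /
    ((Nat.factorial (j + 1) : ℝ) * Real.Gamma (ρ * ((j : ℝ) + 1)))

/-- Two-parameter Mittag-Leffler function `E_{ρ,δ}(z) = Σ_{j≥0} z^j / Γ(ρ j + δ)`. -/
noncomputable def ml2 (ρ δ z : ℝ) : ℝ :=
  ∑' j : ℕ, z ^ j / Real.Gamma (ρ * (j : ℝ) + δ)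

/-- Three-parameter generalized Mittag-Leffler function
`E^γ_{ρ,δ}(z) = Σ_{j≥0} (Γ(γ+j)/Γ(γ)) z^j / (j! Γ(ρ j + δ))`. -/
noncomputable def ml3 (γ ρ δ z : ℝ) : ℝ :=
  ∑' j : ℕ, (Real.Gamma (γ + (j : ℝ)) / Real.Gamma γ) * z ^ j /
    ((Nat.factorial j : ℝ) * Real.Gamma (ρ * (j : ℝ) + δ))

/-- Modified Bessel function of the first kind of order 0:
`I₀(z) = Σ_{j≥0} (z/2)^{2j} / (j!)²`. -/
noncomputable def besselI0 (z : ℝ) : ℝ :=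
  ∑' j : ℕ, (z / 2) ^ (2 * j) / ((Nat.factorial j : ℝ) * (Nat.factorial j : ℝ))

section MittagLefflerLaplace

variable {ρ δ s a : ℝ}

lemma integrableOn_rpow_mul_exp_neg_mul_Ioi {b : ℝ} (hb : 0 < b) (hs : 0 < s) :
    IntegrableOn (fun t => t ^ (b - 1) * exp (-(s * t))) (Set.Ioi 0) :=
  .of_integral_ne_zero (by rw [integral_rpow_mul_exp_neg_mul_Ioi hb hs]; positivity)

lemma exp_neg_mul_mul_rpow_mul_ml2_eq_tsum {t : ℝ} (ht : 0 < t) :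
    exp (-(s * t)) * (t ^ (δ - 1) * ml2 ρ δ (a * t ^ ρ)) =
      ∑' j : ℕ, a ^ j / Gamma (ρ * j + δ) * (t ^ (ρ * j + δ - 1) * exp (-(s * t))) := by
  rw [ml2, ← tsum_mul_left, ← tsum_mul_left]
  refine tsum_congr fun j => ?_
  rw [add_sub_assoc, rpow_add ht, mul_pow, ← rpow_natCast (t ^ ρ), ← rpow_mul ht.le,
    mul_comm ρ]
  ring

lemma integral_mul_rpow_mul_exp_neg_mul (hρ : 0 ≤ ρ) (hδ : 0 < δ) (hs : 0 < s) (j : ℕ) :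
    ∫ t in Set.Ioi (0 : ℝ),
        a ^ j / Gamma (ρ * j + δ) * (t ^ (ρ * j + δ - 1) * exp (-(s * t))) =
      (1 / s) ^ δ * (a * (1 / s) ^ ρ) ^ j := by
  have hb : 0 < ρ * j + δ := by positivity
  rw [integral_const_mul, integral_rpow_mul_exp_neg_mul_Ioi hb hs, rpow_add (by positivity),
    mul_pow, ← rpow_natCast ((1 / s) ^ ρ), ← rpow_mul (by positivity)]
  field_simp [(Gamma_pos_of_pos hb).ne']

theorem integral_exp_neg_mul_mul_rpow_mul_ml2 (hρ : 0 ≤ ρ) (hδ : 0 < δ) (hs : 0 < s)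
    (ha : |a| < s ^ ρ) :
    ∫ t in Set.Ioi (0 : ℝ), exp (-(s * t)) * (t ^ (δ - 1) * ml2 ρ δ (a * t ^ ρ)) =
      s ^ (ρ - δ) / (s ^ ρ - a) := by
  set F : ℕ → ℝ → ℝ := fun j t =>
    a ^ j / Gamma (ρ * j + δ) * (t ^ (ρ * j + δ - 1) * exp (-(s * t)))
  have hq_abs : |a| * (1 / s) ^ ρ < 1 := by
    rwa [one_div, inv_rpow hs.le, ← div_eq_mul_inv, div_lt_one (rpow_pos_of_pos hs ρ)]
  have hq : ‖a * (1 / s) ^ ρ‖ < 1 := by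
    rwa [norm_mul, Real.norm_eq_abs, Real.norm_of_nonneg (by positivity)]
  have hint : ∀ j, IntegrableOn (F j) (Set.Ioi 0) := fun j =>
    (integrableOn_rpow_mul_exp_neg_mul_Ioi (by positivity) hs).const_mul _
  have hnorm : ∀ j,
      ∫ t in Set.Ioi (0 : ℝ), ‖F j t‖ = (1 / s) ^ δ * (|a| * (1 / s) ^ ρ) ^ j := by
    intro j
    rw [← integral_mul_rpow_mul_exp_neg_mul hρ hδ hs j]
    refine setIntegral_congr_fun measurableSet_Ioi fun t ht => ?_
    have hb : 0 < ρ * j + δ := by positivity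
    simp only [F, norm_mul, norm_div, norm_pow, Real.norm_eq_abs,
      abs_of_pos (Gamma_pos_of_pos hb), abs_of_pos (rpow_pos_of_pos (Set.mem_Ioi.mp ht) _),
      abs_of_pos (exp_pos _)]
  have hsum : Summable fun j => ∫ t in Set.Ioi (0 : ℝ), ‖F j t‖ := by
    simp_rw [hnorm]
    exact (summable_geometric_of_lt_one (by positivity) hq_abs).mul_left _
  have hterms : (fun j => ∫ t in Set.Ioi (0 : ℝ), F j t) =
      fun j => (1 / s) ^ δ * (a * (1 / s) ^ ρ) ^ j :=
    funext (integral_mul_rpow_mul_exp_neg_mul hρ hδ hs)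
  have hval := (hasSum_integral_of_summable_integral_norm hint hsum).unique
    (hterms ▸ (hasSum_geometric_of_norm_lt_one hq).mul_left ((1 / s) ^ δ))
  rw [setIntegral_congr_fun measurableSet_Ioi fun t ht => exp_neg_mul_mul_rpow_mul_ml2_eq_tsum ht,
    hval]
  have hsa : s ^ ρ - a ≠ 0 := (sub_pos.mpr ((le_abs_self a).trans_lt ha)).ne'
  rw [one_div, inv_rpow hs.le, inv_rpow hs.le, rpow_sub hs]
  field_simp

theorem integrableOn_exp_neg_mul_mul_rpow_mul_ml2 (hρ : 0 ≤ ρ) (hδ : 0 < δ) (hs : 0 < s)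
    (ha : |a| < s ^ ρ) :
    IntegrableOn (fun t => exp (-(s * t)) * (t ^ (δ - 1) * ml2 ρ δ (a * t ^ ρ)))
      (Set.Ioi 0) := by
  refine .of_integral_ne_zero ?_
  rw [integral_exp_neg_mul_mul_rpow_mul_ml2 hρ hδ hs ha]
  exact (div_pos (rpow_pos_of_pos hs _) (sub_pos.mpr ((le_abs_self a).trans_lt ha))).ne'

end MittagLefflerLaplace

theorem geom_sum₂_Icc_mul {R : Type*} [CommRing R] (x y : R) (n : ℕ) :
    (∑ k ∈ Icc 1 n, x ^ (k - 1) * y ^ (n - k)) * (x - y) = x ^ n - y ^ n := by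
  rw [← Ico_add_one_right_eq_Icc, sum_Ico_eq_sum_range, Nat.add_sub_cancel, ← geom_sum₂_mul]
  congr 1
  refine sum_congr rfl fun i _ => ?_
  rw [Nat.add_sub_cancel_left, Nat.sub_sub, add_comm 1 i]

theorem integral_exp_neg_mul_sum_pow_mul_ml2 {s β c : ℝ} {n : ℕ} (hs : 0 < s)
    (h : |c * β ^ n| < s ^ n) :
    ∫ t in Set.Ioi (0 : ℝ), exp (-(s * t)) *
        ∑ k ∈ Icc 1 n, (β * t) ^ (k - 1) * ml2 n k (c * (β * t) ^ n) =
      (∑ k ∈ Icc 1 n, β ^ (k - 1) * s ^ (n - k)) / (s ^ n - c * β ^ n) := by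
  have ha : |c * β ^ n| < s ^ (n : ℝ) := by rwa [rpow_natCast]
  have hterm : ∀ k ∈ Icc 1 n,
      (fun t => exp (-(s * t)) * ((β * t) ^ (k - 1) * ml2 n k (c * (β * t) ^ n))) =
        fun t => β ^ (k - 1) *
          (exp (-(s * t)) * (t ^ ((k : ℝ) - 1) * ml2 n k (c * β ^ n * t ^ (n : ℝ)))) := by
    intro k hk
    funext t
    rw [← Nat.cast_pred (mem_Icc.mp hk).1, rpow_natCast, rpow_natCast]
    ring_nf
  have hk0 : ∀ k ∈ Icc 1 n, (0 : ℝ) < k := fun k hk => Nat.cast_pos.mpr (mem_Icc.mp hk).1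
  simp_rw [mul_sum]
  rw [integral_finsetSum _ fun k hk => hterm k hk ▸
      (integrableOn_exp_neg_mul_mul_rpow_mul_ml2 n.cast_nonneg (hk0 k hk) hs ha).const_mul _,
    sum_div]
  refine sum_congr rfl fun k hk => ?_
  rw [hterm k hk, integral_const_mul,
    integral_exp_neg_mul_mul_rpow_mul_ml2 n.cast_nonneg (hk0 k hk) hs ha,
    ← Nat.cast_sub (mem_Icc.mp hk).2, rpow_natCast, rpow_natCast, mul_div_assoc]

theorem stmt16_general (lam β : ℝ) (hlam : 0 < lam) (hβ : 0 < β)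
    (n : ℕ) (u v : ℝ) (hu : 0 < u) (hv : 0 < v) :
    (∫ t in Set.Ioi (0 : ℝ),
      Real.exp (-(u * t)) *
        (Real.exp (-(β * t)) * (lam / (lam + v)) *
          ∑ k ∈ Finset.Icc 1 n,
            (β * t) ^ (k - 1) * ml2 (n : ℝ) (k : ℝ) (lam * (β * t) ^ n / (lam + v))))
    = lam * ((β + u) ^ n - β ^ n) /
        (u * ((lam + v) * (β + u) ^ n - lam * β ^ n)) := by
  have hlv : 0 < lam + v := by linarith
  have hc1 : lam / (lam + v) < 1 := (div_lt_one hlv).mpr (by linarith)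
  have ha : lam / (lam + v) * β ^ n < (β + u) ^ n :=
    calc lam / (lam + v) * β ^ n < β ^ n := mul_lt_of_lt_one_left (by positivity) hc1
      _ ≤ (β + u) ^ n := pow_le_pow_left₀ hβ.le (by linarith) n
  have hS : ∑ k ∈ Icc 1 n, β ^ (k - 1) * (β + u) ^ (n - k) = ((β + u) ^ n - β ^ n) / u := by
    rw [eq_div_iff hu.ne']
    linear_combination -geom_sum₂_Icc_mul β (β + u) n
  have hden : 0 < (lam + v) * (β + u) ^ n - lam * β ^ n := by
    rw [div_mul_eq_mul_div, div_lt_iff₀ hlv] at ha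
    linarith
  have hintegrand : ∀ t, exp (-(u * t)) * (exp (-(β * t)) * (lam / (lam + v)) *
        ∑ k ∈ Icc 1 n, (β * t) ^ (k - 1) * ml2 n k (lam * (β * t) ^ n / (lam + v))) =
      lam / (lam + v) * (exp (-((β + u) * t)) *
        ∑ k ∈ Icc 1 n, (β * t) ^ (k - 1) * ml2 n k (lam / (lam + v) * (β * t) ^ n)) := by
    intro t
    simp_rw [mul_div_right_comm lam]
    rw [add_mul, neg_add, exp_add]
    ring
  simp_rw [hintegrand]
  rw [integral_const_mul, integral_exp_neg_mul_sum_pow_mul_ml2 (by linarith)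
    (by rwa [abs_of_nonneg (by positivity)]), hS]
  field_simp

/-- double Laplace transform of the inverse compound
Poisson–Erlang process `Y^{(n)}(t)` in closed form. -/
theorem stmt16 (lam β : ℝ) (hlam : 0 < lam) (hβ : 0 < β)
    (n : ℕ) (hn : 1 ≤ n) (u v : ℝ) (hu : 0 < u) (hv : 0 < v) :
    (∫ t in Set.Ioi (0 : ℝ),
      Real.exp (-(u * t)) *
        (Real.exp (-(β * t)) * (lam / (lam + v)) *
          ∑ k ∈ Finset.Icc 1 n,
            (β * t) ^ (k - 1) * ml2 (n : ℝ) (k : ℝ) (lam * (β * t) ^ n / (lam + v))))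
    = lam * ((β + u) ^ n - β ^ n) /
        (u * ((lam + v) * (β + u) ^ n - lam * β ^ n)) :=
  stmt16_general lam β hlam hβ n u v hu hv
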